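/- arXiv:1912.02360 — 4 statements merged into one kernel-verified Lean document; each statement's English description precedes it below -/
import Mathlib

section
/- Let f : [t₀,∞) → [0,∞) be a nonincreasing right-continuous function such that f(t₀) < 1/(2B) for some constant B > 0, satisfying t·f(τ+t) ≤ B·f(τ)² for all τ ≥ t₀ and all 0 ≤ t ≤ 1, and such that f(t) → 0 as t → ∞. Then f(t) = 0 for all t ≥ t₀ + 4B·f(t₀). -/
/-!
Starting from `t₀`, step forward by `2B·f(τ)`: this step length is at most `1`, so the
hypothesis at `t = 2B·f(τ)` halves `f`. Hence `f` has dropped by the factor `2⁻ⁿ` after `n`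
steps, while the total length of the steps is bounded by the geometric series
`2B·f(t₀)·∑ 2⁻ⁿ = 4B·f(t₀)`. Monotonicity then forces `f = 0` beyond `t₀ + 4B·f(t₀)`.
-/

open Filter

noncomputable def halvingTimes (f : ℝ → ℝ) (B t₀ : ℝ) : ℕ → ℝ
  | 0 => t₀
  | n + 1 => halvingTimes f B t₀ n + 2 * B * f (halvingTimes f B t₀ n)

section

variable {f : ℝ → ℝ} {t₀ B : ℝ}

lemma apply_add_le_half (hB : 0 < B) (hf0 : ∀ t ≥ t₀, 0 ≤ f t)
    (hiter : ∀ τ ≥ t₀, ∀ t : ℝ, 0 ≤ t → t ≤ 1 → t * f (τ + t) ≤ B * (f τ) ^ 2)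
    {τ : ℝ} (hτ : t₀ ≤ τ) (hτ1 : 2 * B * f τ ≤ 1) :
    f (τ + 2 * B * f τ) ≤ f τ / 2 := by
  rcases (hf0 τ hτ).eq_or_lt with h0 | hpos
  · simp [← h0]
  · have hstep := hiter τ hτ _ (by positivity) hτ1
    have hsq : B * f τ ^ 2 = 2 * B * f τ * (f τ / 2) := by ring
    exact le_of_mul_le_mul_left (hsq ▸ hstep) (by positivity)

lemma halvingTimes_spec (hB : 0 < B) (hf0 : ∀ t ≥ t₀, 0 ≤ f t)
    (hmono : AntitoneOn f (Set.Ici t₀)) (hsmall : f t₀ < 1 / (2 * B))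
    (hiter : ∀ τ ≥ t₀, ∀ t : ℝ, 0 ≤ t → t ≤ 1 → t * f (τ + t) ≤ B * (f τ) ^ 2) (n : ℕ) :
    t₀ ≤ halvingTimes f B t₀ n ∧ f (halvingTimes f B t₀ n) ≤ f t₀ / 2 ^ n := by
  induction n with
  | zero => simp [halvingTimes]
  | succ n ih =>
    obtain ⟨hτ, hfτ⟩ := ih
    have hτ1 : 2 * B * f (halvingTimes f B t₀ n) ≤ 1 := by
      have := hmono Set.self_mem_Ici hτ hτ
      rw [lt_div_iff₀ (by positivity)] at hsmall
      nlinarith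
    refine ⟨?_, ?_⟩
    · have := hf0 _ hτ
      simp only [halvingTimes]
      nlinarith
    · calc f (halvingTimes f B t₀ (n + 1))
          ≤ f (halvingTimes f B t₀ n) / 2 := apply_add_le_half hB hf0 hiter hτ hτ1
        _ ≤ f t₀ / 2 ^ n / 2 := by gcongr
        _ = f t₀ / 2 ^ (n + 1) := by rw [pow_succ, div_div]

lemma halvingTimes_add_le (hB : 0 < B) (hf0 : ∀ t ≥ t₀, 0 ≤ f t)
    (hmono : AntitoneOn f (Set.Ici t₀)) (hsmall : f t₀ < 1 / (2 * B))
    (hiter : ∀ τ ≥ t₀, ∀ t : ℝ, 0 ≤ t → t ≤ 1 → t * f (τ + t) ≤ B * (f τ) ^ 2) (n : ℕ) :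
    halvingTimes f B t₀ n + 4 * B * f t₀ / 2 ^ n ≤ t₀ + 4 * B * f t₀ := by
  induction n with
  | zero => simp [halvingTimes]
  | succ n ih =>
    have hfτ := (halvingTimes_spec hB hf0 hmono hsmall hiter n).2
    have hstep : 2 * B * f (halvingTimes f B t₀ n) ≤ 2 * B * (f t₀ / 2 ^ n) := by gcongr
    calc halvingTimes f B t₀ (n + 1) + 4 * B * f t₀ / 2 ^ (n + 1)
        = halvingTimes f B t₀ n + 2 * B * f (halvingTimes f B t₀ n)
          + 2 * B * (f t₀ / 2 ^ n) := by simp only [halvingTimes, pow_succ]; ring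
      _ ≤ halvingTimes f B t₀ n + 2 * B * (f t₀ / 2 ^ n) + 2 * B * (f t₀ / 2 ^ n) := by
          linarith
      _ = halvingTimes f B t₀ n + 4 * B * f t₀ / 2 ^ n := by ring
      _ ≤ t₀ + 4 * B * f t₀ := ih

end

theorem stmt0_general (t₀ B : ℝ) (hB : 0 < B) (f : ℝ → ℝ)
    (hf0 : ∀ t ≥ t₀, 0 ≤ f t)
    (hmono : AntitoneOn f (Set.Ici t₀))
    (hsmall : f t₀ < 1 / (2 * B))
    (hiter : ∀ τ ≥ t₀, ∀ t : ℝ, 0 ≤ t → t ≤ 1 → t * f (τ + t) ≤ B * (f τ) ^ 2) :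
    ∀ t ≥ t₀ + 4 * B * f t₀, f t = 0 := by
  intro t ht
  have hbound (n : ℕ) : f t ≤ f t₀ / 2 ^ n := by
    obtain ⟨hτ, hfτ⟩ := halvingTimes_spec hB hf0 hmono hsmall hiter n
    have hτt : halvingTimes f B t₀ n ≤ t := by
      have := halvingTimes_add_le hB hf0 hmono hsmall hiter n
      have : 0 ≤ 4 * B * f t₀ / 2 ^ n := by have := hf0 t₀ le_rfl; positivity
      linarith
    exact (hmono hτ (hτ.trans hτt) hτt).trans hfτ
  have hlim : Tendsto (fun n : ℕ ↦ f t₀ / 2 ^ n) atTop (nhds 0) :=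
    tendsto_const_nhds.div_atTop (tendsto_pow_atTop_atTop_of_one_lt one_lt_two)
  have ht₀ : t₀ ≤ t := by have := hf0 t₀ le_rfl; nlinarith
  exact le_antisymm (ge_of_tendsto' hlim hbound) (hf0 t ht₀)

theorem stmt0 (t₀ B : ℝ) (hB : 0 < B) (f : ℝ → ℝ)
    (hf0 : ∀ t ≥ t₀, 0 ≤ f t)
    (hmono : AntitoneOn f (Set.Ici t₀))
    (hrc : ∀ t ≥ t₀, ContinuousWithinAt f (Set.Ici t) t)
    (hsmall : f t₀ < 1 / (2 * B))
    (hiter : ∀ τ ≥ t₀, ∀ t : ℝ, 0 ≤ t → t ≤ 1 → t * f (τ + t) ≤ B * (f τ) ^ 2)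
    (hlim : Filter.Tendsto f Filter.atTop (nhds 0)) :
    ∀ t ≥ t₀ + 4 * B * f t₀, f t = 0 :=
  stmt0_general t₀ B hB f hf0 hmono hsmall hiter
end

section
/- Let u : ∂Δ_λ^∨ → ℝ be continuous on the boundary of the convex polytope Δ_λ^∨ ⊂ N_ℝ. Suppose for every x ∈ ∂Δ_λ^∨ there exists p ∈ Δ such that u(y) ≥ u(x) + ⟨p, y−x⟩ for all y ∈ ∂Δ_λ^∨. Then the double Legendre transform u**(x) = sup_{p∈Δ} (⟨x,p⟩ − u*(p)), where u*(p) = sup_{x∈∂Δ_λ^∨}(⟨x,p⟩ − u(x)), defines a convex function on N_ℝ = ℝ^{n+1} that agrees with u on ∂Δ_λ^∨ and satisfies sup_{x∈N_ℝ} |u**(x) − max_{m∈Δ}⟨m,x⟩| < ∞. -/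
/-!
The Legendre transform `u*` of a continuous `u` on the compact set `∂P` is bounded on the compact
set `Δ`, by the size of `⟨x, p⟩ - u x` on `∂P × Δ`. Hence `u**` is a supremum of a pointwise bounded
family of affine functions, so it is convex, and it differs from the support function
`x ↦ sup_{m ∈ Δ} ⟨m, x⟩` of `Δ` by at most `sup_Δ |u*|`. On `∂P`, the Fenchel–Young inequality
gives `u** ≤ u`, while a subgradient `p ∈ Δ` of `u` at `x` gives `u*(p) = ⟨x, p⟩ - u x`, hence
`u x ≤ u** x`.
-/

open Set

lemma BddAbove.image_of_le_add {α : Type*} {s : Set α} {f g : α → ℝ} {C : ℝ}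
    (hg : BddAbove (g '' s)) (h : ∀ a ∈ s, f a ≤ g a + C) : BddAbove (f '' s) := by
  obtain ⟨b, hb⟩ := hg
  refine ⟨b + C, forall_mem_image.2 fun a ha => ?_⟩
  linarith [h a ha, hb (mem_image_of_mem g ha)]

lemma abs_sSup_le_of_forall_abs_le {s : Set ℝ} {C : ℝ} (hC : 0 ≤ C) (h : ∀ a ∈ s, |a| ≤ C) :
    |sSup s| ≤ C := by
  refine abs_le.2 ⟨?_, Real.sSup_le (fun a ha => (abs_le.1 (h a ha)).2) hC⟩
  rcases s.eq_empty_or_nonempty with rfl | ⟨a, ha⟩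
  · simpa using hC
  · exact (abs_le.1 (h a ha)).1.trans (le_csSup ⟨C, fun b hb => (abs_le.1 (h b hb)).2⟩ ha)

lemma sSup_image_le_sSup_image_add {α : Type*} {s : Set α} {f g : α → ℝ} {C : ℝ}
    (hs : s.Nonempty) (hg : BddAbove (g '' s)) (h : ∀ a ∈ s, f a ≤ g a + C) :
    sSup (f '' s) ≤ sSup (g '' s) + C :=
  csSup_le (hs.image f) <| forall_mem_image.2 fun a ha =>
    (h a ha).trans (add_le_add_left (le_csSup hg (mem_image_of_mem g ha)) C)

lemma abs_sSup_image_sub_sSup_image_le {α : Type*} {s : Set α} {f g : α → ℝ} {C : ℝ}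
    (hC : 0 ≤ C) (hg : BddAbove (g '' s)) (h : ∀ a ∈ s, |f a - g a| ≤ C) :
    |sSup (f '' s) - sSup (g '' s)| ≤ C := by
  rcases s.eq_empty_or_nonempty with rfl | hs
  · simpa using hC
  have hfg : ∀ a ∈ s, f a ≤ g a + C := fun a ha => by linarith [(abs_le.1 (h a ha)).2]
  have hgf : ∀ a ∈ s, g a ≤ f a + C := fun a ha => by linarith [(abs_le.1 (h a ha)).1]
  rw [abs_sub_le_iff, sub_le_iff_le_add, sub_le_iff_le_add]
  exact ⟨add_comm C _ ▸ sSup_image_le_sSup_image_add hs hg hfg,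
    add_comm C _ ▸ sSup_image_le_sSup_image_add hs (hg.image_of_le_add hfg) hgf⟩

lemma convexOn_sSup_image {α E : Type*} [AddCommMonoid E] [Module ℝ E] {s : Set E} {T : Set α}
    {f : α → E → ℝ} (hs : Convex ℝ s) (hf : ∀ a ∈ T, ConvexOn ℝ s (f a))
    (hbdd : ∀ x ∈ s, BddAbove ((f · x) '' T)) :
    ConvexOn ℝ s fun x => sSup ((f · x) '' T) := by
  rcases T.eq_empty_or_nonempty with rfl | hT
  · simpa using convexOn_const 0 hs
  refine ⟨hs, fun x hx y hy a b ha hb hab => csSup_le (hT.image _) ?_⟩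
  rintro _ ⟨t, ht, rfl⟩
  calc f t (a • x + b • y) ≤ a • f t x + b • f t y := (hf t ht).2 hx hy ha hb hab
    _ ≤ a • sSup ((f · x) '' T) + b • sSup ((f · y) '' T) := by
      gcongr
      exacts [le_csSup (hbdd x hx) (mem_image_of_mem _ ht),
        le_csSup (hbdd y hy) (mem_image_of_mem _ ht)]

section Legendre

variable {ι : Type*} [Fintype ι]

noncomputable def legendreTransform (S : Set (ι → ℝ)) (u : (ι → ℝ) → ℝ) (p : ι → ℝ) : ℝ :=
  sSup ((fun x => x ⬝ᵥ p - u x) '' S)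

lemma bddAbove_image_dotProduct_sub {S : Set (ι → ℝ)} {u : (ι → ℝ) → ℝ} (hS : IsCompact S)
    (hu : BddBelow (u '' S)) (p : ι → ℝ) : BddAbove ((fun x => x ⬝ᵥ p - u x) '' S) := by
  obtain ⟨c, hc⟩ := hu
  refine (hS.bddAbove_image (f := (· ⬝ᵥ p)) (by fun_prop)).image_of_le_add (C := -c) ?_
  intro x hx
  linarith [hc (mem_image_of_mem u hx)]

lemma le_legendreTransform {S : Set (ι → ℝ)} {u : (ι → ℝ) → ℝ} {x p : ι → ℝ}
    (hbdd : BddAbove ((fun y => y ⬝ᵥ p - u y) '' S)) (hx : x ∈ S) :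
    x ⬝ᵥ p - u x ≤ legendreTransform S u p :=
  le_csSup hbdd (mem_image_of_mem _ hx)

lemma legendreTransform_le_of_subgradient {S : Set (ι → ℝ)} {u : (ι → ℝ) → ℝ} {x p : ι → ℝ}
    (hx : x ∈ S) (hsub : ∀ y ∈ S, u x + p ⬝ᵥ (y - x) ≤ u y) :
    legendreTransform S u p ≤ x ⬝ᵥ p - u x := by
  refine csSup_le ⟨_, mem_image_of_mem _ hx⟩ (forall_mem_image.2 fun y hy => ?_)
  have := hsub y hy
  rw [dotProduct_sub, dotProduct_comm p y, dotProduct_comm p x] at this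
  linarith

lemma exists_abs_legendreTransform_le {S T : Set (ι → ℝ)} {u : (ι → ℝ) → ℝ}
    (hS : IsCompact S) (hu : ContinuousOn u S) (hT : IsCompact T) :
    ∃ C, 0 ≤ C ∧ ∀ p ∈ T, |legendreTransform S u p| ≤ C := by
  obtain ⟨C, hC⟩ := (hS.prod hT).exists_bound_of_continuousOn
    (f := fun q : (ι → ℝ) × (ι → ℝ) => q.1 ⬝ᵥ q.2 - u q.1)
    ((by fun_prop : Continuous fun q : (ι → ℝ) × (ι → ℝ) => q.1 ⬝ᵥ q.2).continuousOn.sub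
      (hu.comp continuousOn_fst fun _ hq => hq.1))
  refine ⟨max C 0, le_max_right C 0, fun p hp =>
    abs_sSup_le_of_forall_abs_le (le_max_right C 0) ?_⟩
  rintro _ ⟨x, hx, rfl⟩
  exact (hC (x, p) ⟨hx, hp⟩).trans (le_max_left C 0)

lemma convexOn_legendreTransform {T : Set (ι → ℝ)} {v : (ι → ℝ) → ℝ}
    (hbdd : ∀ x, BddAbove ((fun q => q ⬝ᵥ x - v q) '' T)) :
    ConvexOn ℝ univ (legendreTransform T v) :=
  convexOn_sSup_image convex_univ
    (fun q _ => ((dotProductBilin ℝ ℝ q).convexOn convex_univ).sub (concaveOn_const _ convex_univ))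
    fun x _ => hbdd x

lemma legendreTransform_legendreTransform_of_subgradient {S T : Set (ι → ℝ)}
    {u : (ι → ℝ) → ℝ} {x p : ι → ℝ}
    (hS : ∀ q ∈ T, BddAbove ((fun y => y ⬝ᵥ q - u y) '' S))
    (hT : BddAbove ((fun q => q ⬝ᵥ x - legendreTransform S u q) '' T))
    (hx : x ∈ S) (hp : p ∈ T) (hsub : ∀ y ∈ S, u x + p ⬝ᵥ (y - x) ≤ u y) :
    legendreTransform T (legendreTransform S u) x = u x := by
  refine le_antisymm (csSup_le ⟨_, mem_image_of_mem _ hp⟩ (forall_mem_image.2 fun q hq => ?_)) ?_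
  · have := le_legendreTransform (hS q hq) hx
    rw [dotProduct_comm] at this
    linarith
  · have := legendreTransform_le_of_subgradient hx hsub
    have := le_legendreTransform hT hp
    rw [dotProduct_comm] at this
    linarith

lemma abs_legendreTransform_sub_sSup_le {T : Set (ι → ℝ)} {v : (ι → ℝ) → ℝ} {C : ℝ}
    (hT : IsCompact T) (hC : 0 ≤ C) (hv : ∀ q ∈ T, |v q| ≤ C) (x : ι → ℝ) :
    |legendreTransform T v x - sSup ((· ⬝ᵥ x) '' T)| ≤ C :=
  abs_sSup_image_sub_sSup_image_le hC (hT.bddAbove_image (by fun_prop)) fun q hq => by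
    simpa [abs_neg] using hv q hq

end Legendre

theorem stmt3_general (n : ℕ) (Δ : Set (Fin (n+1) → ℝ)) (hΔcomp : IsCompact Δ)
    (P : Set (Fin (n+1) → ℝ)) (hPcomp : IsCompact P)
    (u : (Fin (n+1) → ℝ) → ℝ) (hu : ContinuousOn u (frontier P))
    (hsub : ∀ x ∈ frontier P, ∃ p ∈ Δ, ∀ y ∈ frontier P,
      u x + ∑ i, p i * (y i - x i) ≤ u y)
    (ustar u2 : (Fin (n+1) → ℝ) → ℝ)
    (hustar : ∀ p, ustar p = sSup ((fun x => (∑ i, x i * p i) - u x) '' frontier P))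
    (hu2 : ∀ x, u2 x = sSup ((fun p => (∑ i, x i * p i) - ustar p) '' Δ)) :
    ConvexOn ℝ Set.univ u2 ∧ (∀ x ∈ frontier P, u2 x = u x) ∧
      ∃ C : ℝ, ∀ x, |u2 x - sSup ((fun m => ∑ i, m i * x i) '' Δ)| ≤ C := by
  have hFcomp : IsCompact (frontier P) :=
    hPcomp.of_isClosed_subset isClosed_frontier hPcomp.isClosed.frontier_subset
  have hustar' : ustar = legendreTransform (frontier P) u := funext hustar
  have hu2' : u2 = legendreTransform Δ ustar := funext fun x => by
    simp_rw [hu2, legendreTransform, dotProduct_comm _ x]; rfl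
  subst hustar' hu2'
  obtain ⟨C, hC0, hC⟩ := exists_abs_legendreTransform_le hFcomp hu hΔcomp
  have hbddΔ (x : Fin (n+1) → ℝ) := bddAbove_image_dotProduct_sub hΔcomp
    ⟨-C, forall_mem_image.2 fun p hp => (abs_le.1 (hC p hp)).1⟩ x
  refine ⟨convexOn_legendreTransform hbddΔ, fun x hx => ?_,
    C, abs_legendreTransform_sub_sSup_le hΔcomp hC0 hC⟩
  obtain ⟨p, hp, hpx⟩ := hsub x hx
  exact legendreTransform_legendreTransform_of_subgradient
    (fun q _ => bddAbove_image_dotProduct_sub hFcomp (hFcomp.bddBelow_image hu) q)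
    (hbddΔ x) hx hp hpx

theorem stmt3 (n : ℕ) (Δ : Set (Fin (n+1) → ℝ)) (hΔne : Δ.Nonempty) (hΔcomp : IsCompact Δ)
    (hΔconv : Convex ℝ Δ)
    (hΔpoly : ∃ F : Finset (Fin (n+1) → ℝ), Δ = convexHull ℝ (F : Set (Fin (n+1) → ℝ)))
    (P : Set (Fin (n+1) → ℝ)) (hPcomp : IsCompact P) (hPconv : Convex ℝ P)
    (hPpoly : ∃ F : Finset (Fin (n+1) → ℝ), P = convexHull ℝ (F : Set (Fin (n+1) → ℝ)))
    (hPint : (interior P).Nonempty)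
    (u : (Fin (n+1) → ℝ) → ℝ) (hu : ContinuousOn u (frontier P))
    (hsub : ∀ x ∈ frontier P, ∃ p ∈ Δ, ∀ y ∈ frontier P,
      u x + ∑ i, p i * (y i - x i) ≤ u y)
    (ustar u2 : (Fin (n+1) → ℝ) → ℝ)
    (hustar : ∀ p, ustar p = sSup ((fun x => (∑ i, x i * p i) - u x) '' frontier P))
    (hu2 : ∀ x, u2 x = sSup ((fun p => (∑ i, x i * p i) - ustar p) '' Δ)) :
    ConvexOn ℝ Set.univ u2 ∧ (∀ x ∈ frontier P, u2 x = u x) ∧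
      ∃ C : ℝ, ∀ x, |u2 x - sSup ((fun m => ∑ i, m i * x i) '' Δ)| ≤ C :=
  stmt3_general n Δ hΔcomp P hPcomp u hu hsub ustar u2 hustar hu2
end

section
/- Let Φ be a bounded subharmonic function on B₂ × ℝᵏ ⊂ ℝⁿ × ℝᵏ (with the Euclidean metric) which is periodic under the lattice εℤᵏ acting on the ℝᵏ factor, where 0 < ε ≪ 1. Let v(x) = ⨍_{[0,ε]^k} Φ(x,y) dy be the fibrewise average. Assume sup|Φ| ≤ A and that v is Lipschitz with constant L on B₂. Then on B₁ × ℝᵏ one has Φ ≤ v + C·ε^{1/2}, where C depends only on n, k, A, and L. -/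
/-!
Averaging the mean value inequality over a lattice cell. For `c ∈ [0, ε]ᵏ` the ball `B = B(z, r)`
and its translate by `(0, c)` differ only inside the shell `r - √k ε < |w - z| < r + √k ε`, whose
volume is `O(√k ε / r) |B|`, so `∫_B Φ ≤ ∫_B Φ(· + (0, c)) + O(A √k ε / r) |B|`. Averaging over `c`
and using periodicity replaces the integrand on the right by `v` of the `ℝⁿ`-component, which is at
most `v(x₀) + L r` on `B`. Together with `Φ z ≤ ⨍_B Φ` this gives
`Φ z ≤ v(x₀) + L r + O(A √k ε / r)`, and `r = √ε` balances the two errors.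
-/

open MeasureTheory Set Metric
open scoped symmDiff

/-- Combine a point of `ℝⁿ` and a point of `ℝᵏ` into a point of the Euclidean
space `ℝ^{n+k}`. -/
noncomputable def embXY (n k : ℕ) (x : EuclideanSpace ℝ (Fin n)) (y : Fin k → ℝ) :
    EuclideanSpace ℝ (Fin (n + k)) :=
  (EuclideanSpace.equiv (Fin (n + k)) ℝ).symm
    (Fin.append (EuclideanSpace.equiv (Fin n) ℝ x) y)

theorem setIntegral_pi_Icc_add_of_periodic {ι : Type*} [Fintype ι] {ε : ℝ} (hε : 0 < ε)
    {f : (ι → ℝ) → ℝ} (hf : ∀ (y : ι → ℝ) (m : ι → ℤ), f (y + fun j => ε * m j) = f y)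
    (t : ι → ℝ) :
    ∫ c in univ.pi fun _ => Icc 0 ε, f (t + c) = ∫ c in univ.pi fun _ => Icc 0 ε, f c := by
  -- `[0, ε)^ι` is a fundamental domain of the lattice `εℤ^ι`, and so is each of its translates.
  have hae : (univ.pi fun _ : ι => Icc (0 : ℝ) ε) =ᵐ[volume] univ.pi fun _ => Ico 0 ε := by
    rw [pi_univ_Icc, volume_pi]
    exact Measure.univ_pi_Ico_ae_eq_Icc.symm
  rw [setIntegral_congr_set hae, setIntegral_congr_set hae]
  let b := (Pi.basisFun ℝ ι).unitsSMul fun _ => Units.mk0 ε hε.ne'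
  have hb : ZSpan.fundamentalDomain b = univ.pi fun _ => Ico 0 ε := by
    ext x
    simp [ZSpan.mem_fundamentalDomain, b, Module.Basis.repr_unitsSMul, Units.smul_def,
      ← div_eq_inv_mul, le_div_iff₀ hε, div_lt_one hε]
  let G := (Submodule.span ℤ (range b)).toAddSubgroup
  have : Countable G := inferInstanceAs (Countable (Submodule.span ℤ (range b)))
  have hQ := ZSpan.isAddFundamentalDomain' b volume
  rw [hb] at hQ
  have hinv : ∀ (g : G) (x : ι → ℝ), f (g +ᵥ x) = f x := by
    rintro ⟨g, hg⟩ x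
    obtain ⟨m, rfl⟩ : ∃ m : ι → ℤ, g = fun j => ε * m j := by
      rw [Submodule.mem_toAddSubgroup, b.mem_span_iff_repr_mem ℤ] at hg
      choose m hm using hg
      refine ⟨m, funext fun j => ?_⟩
      have := hm j
      simp only [algebraMap_int_eq, eq_intCast, Module.Basis.repr_unitsSMul, Pi.basisFun_repr,
        Units.smul_def, Units.val_inv_eq_inv_val, Units.val_mk0, smul_eq_mul, b] at this
      rw [this, mul_inv_cancel_left₀ hε.ne']
    rw [AddSubgroup.vadd_def, vadd_eq_add, add_comm, hf]
  calc ∫ c in univ.pi fun _ => Ico 0 ε, f (t + c)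
      = ∫ c in (t + ·) '' univ.pi fun _ => Ico (0 : ℝ) ε, f c :=
        ((measurePreserving_add_left volume t).setIntegral_image_emb
          (measurableEmbedding_addLeft t) f _).symm
    _ = _ := (hQ.vadd_of_comm t).setIntegral_eq hQ hinv

theorem norm_setIntegral_sub_setIntegral_le {α E : Type*} [MeasurableSpace α]
    [NormedAddCommGroup E] [NormedSpace ℝ E] {μ : Measure α} {f : α → E} {A : ℝ} {s t : Set α}
    (hf : AEStronglyMeasurable f μ) (hfA : ∀ x, ‖f x‖ ≤ A) (hs : MeasurableSet s)
    (ht : MeasurableSet t) (hμs : μ s ≠ ⊤) (hμt : μ t ≠ ⊤) :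
    ‖∫ x in s, f x ∂μ - ∫ x in t, f x ∂μ‖ ≤ A * μ.real (s ∆ t) := by
  have hint : ∀ u, μ u ≠ ⊤ → IntegrableOn f u μ := fun u hu =>
    Measure.integrableOn_of_bounded hu hf (Filter.Eventually.of_forall hfA)
  have hdiff : ∀ u v, μ u ≠ ⊤ → ‖∫ x in u \ v, f x ∂μ‖ ≤ A * μ.real (u \ v) := fun u v hu =>
    norm_setIntegral_le_of_norm_le_const ((measure_mono sdiff_subset).trans_lt hu.lt_top)
      fun x _ => hfA x
  rw [← integral_inter_add_sdiff ht (hint s hμs), ← integral_inter_add_sdiff hs (hint t hμt),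
    inter_comm, measureReal_symmDiff_eq hs ht hμs hμt, add_sub_add_left_eq_sub, mul_add]
  exact (norm_sub_le _ _).trans (add_le_add (hdiff s t hμs) (hdiff t s hμt))

theorem norm_setAverage_le {α E : Type*} [MeasurableSpace α] [NormedAddCommGroup E]
    [NormedSpace ℝ E] {μ : Measure α} {f : α → E} {s : Set α} {A : ℝ} (hA : 0 ≤ A)
    (hμs : μ s ≠ ⊤) (hfA : ∀ x ∈ s, ‖f x‖ ≤ A) : ‖⨍ x in s, f x ∂μ‖ ≤ A := by
  rw [setAverage_eq, norm_smul, norm_inv, Real.norm_of_nonneg measureReal_nonneg]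
  rcases (measureReal_nonneg (μ := μ) (s := s)).eq_or_lt with h | h
  · simp [← h, hA]
  · rw [inv_mul_le_iff₀ h, mul_comm]
    exact norm_setIntegral_le_of_norm_le_const hμs.lt_top hfA

theorem ball_symmDiff_ball_subset {X : Type*} [PseudoMetricSpace X] {x y : X} {r δ : ℝ}
    (h : dist x y ≤ δ) : ball x r ∆ ball y r ⊆ ball x (r + δ) \ ball x (r - δ) := by
  rintro w (⟨hwx, hwy⟩ | ⟨hwy, hwx⟩) <;> simp only [mem_ball, mem_sdiff, not_lt] at * <;>
    constructor <;>
      linarith [dist_triangle w x y, dist_triangle w y x, dist_comm x y,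
        dist_nonneg (x := x) (y := y)]

theorem setIntegral_ball_comp_add_right {E : Type*} [NormedAddCommGroup E] [MeasurableSpace E]
    [BorelSpace E] {μ : Measure E} [μ.IsAddRightInvariant] (f : E → ℝ) (z c : E) (r : ℝ) :
    ∫ w in ball z r, f (w + c) ∂μ = ∫ w in ball (z + c) r, f w ∂μ := by
  have := (measurePreserving_add_right μ c).setIntegral_preimage_emb
    (measurableEmbedding_addRight c) f (ball (z + c) r)
  rwa [preimage_add_right_ball, add_sub_cancel_right] at this

theorem setIntegral_ball_le_setIntegral_ball_add {E : Type*} [NormedAddCommGroup E]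
    [NormedSpace ℝ E] [MeasurableSpace E] [BorelSpace E] [FiniteDimensional ℝ E]
    {μ : Measure E} [μ.IsAddHaarMeasure] {f : E → ℝ} {A δ : ℝ} (hf : Measurable f)
    (hfA : ∀ x, |f x| ≤ A) (z c : E) (r : ℝ) (hc : ‖c‖ ≤ δ) :
    ∫ w in ball z r, f w ∂μ ≤
      ∫ w in ball z r, f (w + c) ∂μ + A * μ.real (ball z (r + δ) \ ball z (r - δ)) := by
  have hA : 0 ≤ A := (abs_nonneg _).trans (hfA z)
  have hsymm : ball z r ∆ ball (z + c) r ⊆ ball z (r + δ) \ ball z (r - δ) :=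
    ball_symmDiff_ball_subset (by simpa using hc)
  have := norm_setIntegral_sub_setIntegral_le (μ := μ) (s := ball z r) (t := ball (z + c) r)
    hf.aestronglyMeasurable hfA measurableSet_ball measurableSet_ball
    (measure_ball_lt_top (μ := μ)).ne (measure_ball_lt_top (μ := μ)).ne
  rw [setIntegral_ball_comp_add_right]
  have hmono := measureReal_mono hsymm
    ((measure_mono sdiff_subset).trans_lt (measure_ball_lt_top (μ := μ))).ne
  linarith [(Real.le_norm_self _).trans this, mul_le_mul_of_nonneg_left hmono hA]

theorem one_add_pow_sub_one_sub_pow_le {t : ℝ} (ht₀ : 0 ≤ t) (ht₁ : t ≤ 1) (d : ℕ) :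
    (1 + t) ^ d - (1 - t) ^ d ≤ d * 2 ^ d * t := by
  induction d with
  | zero => simp
  | succ d ih =>
    have hmono : (1 - t) ^ d ≤ (1 + t) ^ d := pow_le_pow_left₀ (by linarith) (by linarith) d
    have hle : (1 - t) ^ d ≤ 1 := pow_le_one₀ (by linarith) (by linarith)
    have h2 : (1 : ℝ) ≤ 2 ^ d := one_le_pow₀ (by norm_num)
    calc (1 + t) ^ (d + 1) - (1 - t) ^ (d + 1)
        = (1 + t) * ((1 + t) ^ d - (1 - t) ^ d) + 2 * t * (1 - t) ^ d := by ring
      _ ≤ 2 * (d * 2 ^ d * t) + 2 * t * 2 ^ d := by gcongr <;> nlinarith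
      _ = (d + 1 : ℕ) * 2 ^ (d + 1) * t := by push_cast; ring

/-- For `t = 1` this fails when `E` is trivial: the inner ball is then empty but the outer one is
not. -/
theorem measureReal_ball_sdiff_ball_le {E : Type*} [NormedAddCommGroup E] [NormedSpace ℝ E]
    [MeasurableSpace E] [BorelSpace E] [FiniteDimensional ℝ E] (μ : Measure E)
    [μ.IsAddHaarMeasure] (z : E) {r t : ℝ} (hr : 0 < r) (ht₀ : 0 ≤ t) (ht₁ : t < 1) :
    μ.real (ball z (r + r * t) \ ball z (r - r * t)) ≤
      Module.finrank ℝ E * 2 ^ Module.finrank ℝ E * t * μ.real (ball z r) := by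
  have hball : ∀ ρ, 0 < ρ → μ.real (ball z ρ) = ρ ^ Module.finrank ℝ E * μ.real (ball 0 1) :=
    fun ρ hρ => by
      rw [measureReal_def, Measure.addHaar_ball_of_pos μ z hρ, ENNReal.toReal_mul,
        ENNReal.toReal_ofReal (by positivity), measureReal_def]
  have hsub : ball z (r - r * t) ⊆ ball z (r + r * t) := ball_subset_ball (by nlinarith)
  rw [measureReal_sdiff hsub measurableSet_ball, hball _ (by nlinarith), hball _ (by nlinarith),
    hball _ hr, show r + r * t = r * (1 + t) by ring, show r - r * t = r * (1 - t) by ring,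
    mul_pow, mul_pow]
  have := one_add_pow_sub_one_sub_pow_le ht₀ ht₁.le (Module.finrank ℝ E)
  have hpos : 0 ≤ r ^ Module.finrank ℝ E * μ.real (ball (0 : E) 1) := by positivity
  nlinarith

theorem le_mul_measureReal_add_of_setAverage_le {α β : Type*} [MeasurableSpace α]
    [MeasurableSpace β] {μ : Measure α} {ν : Measure β} [SFinite μ] [SFinite ν] {s : Set α}
    {t : Set β} {F : α → β → ℝ} {I E K : ℝ} (hs : MeasurableSet s) (ht : MeasurableSet t)
    (hμs : 0 < μ.real s) (hνt : ν t ≠ ⊤)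
    (hF : Integrable (Function.uncurry F) ((μ.restrict s).prod (ν.restrict t)))
    (hI : ∀ a ∈ s, I ≤ ∫ b in t, F a b ∂ν + E) (hK : ∀ b ∈ t, ⨍ a in s, F a b ∂μ ≤ K) :
    I ≤ K * ν.real t + E := by
  have hμs' : μ s ≠ ⊤ := fun h => by simp [Measure.real, h] at hμs
  have key : μ.real s * (I - E) ≤ μ.real s * (K * ν.real t) :=
    calc μ.real s * (I - E) = ∫ _ in s, (I - E) ∂μ := by rw [setIntegral_const, smul_eq_mul]
      _ ≤ ∫ a in s, ∫ b in t, F a b ∂ν ∂μ :=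
        setIntegral_mono_on (integrableOn_const hμs') hF.integral_prod_left hs
          fun a ha => by linarith [hI a ha]
      _ = ∫ b in t, ∫ a in s, F a b ∂μ ∂ν := integral_integral_swap hF
      _ ≤ ∫ _ in t, μ.real s * K ∂ν := by
        refine setIntegral_mono_on hF.integral_prod_right (integrableOn_const hνt) ht
          fun b hb => ?_
        have := hK b hb
        rwa [setAverage_eq, smul_eq_mul, inv_mul_le_iff₀ hμs] at this
      _ = μ.real s * (K * ν.real t) := by rw [setIntegral_const, smul_eq_mul]; ring
  linarith [le_of_mul_le_mul_left key hμs]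

section Product

variable {n k : ℕ}

@[simp]
theorem embXY_castAdd (x : EuclideanSpace ℝ (Fin n)) (y : Fin k → ℝ) (i : Fin n) :
    embXY n k x y (Fin.castAdd k i) = x i := by
  simp [embXY]

@[simp]
theorem embXY_natAdd (x : EuclideanSpace ℝ (Fin n)) (y : Fin k → ℝ) (j : Fin k) :
    embXY n k x y (Fin.natAdd n j) = y j := by
  simp [embXY]

theorem embXY_add (x x' : EuclideanSpace ℝ (Fin n)) (y y' : Fin k → ℝ) :
    embXY n k x y + embXY n k x' y' = embXY n k (x + x') (y + y') := by
  ext i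
  induction i using Fin.addCases <;> simp

theorem measurable_embXY (x : EuclideanSpace ℝ (Fin n)) : Measurable (embXY n k x) := by
  unfold embXY; fun_prop

theorem norm_embXY_zero_le {c : Fin k → ℝ} {s : ℝ} (hs : 0 ≤ s) (hc : ∀ j, |c j| ≤ s) :
    ‖embXY n k 0 c‖ ≤ √k * s := by
  rw [EuclideanSpace.norm_eq, ← Real.sqrt_sq hs, ← Real.sqrt_mul k.cast_nonneg]
  refine Real.sqrt_le_sqrt ?_
  rw [Fin.sum_univ_add]
  simpa using Finset.sum_le_card_nsmul Finset.univ (fun j => c j ^ 2) _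
    fun j _ => sq_le_sq' (abs_le.1 (hc j)).1 (abs_le.1 (hc j)).2

noncomputable def projX (n k : ℕ) (z : EuclideanSpace ℝ (Fin (n + k))) :
    EuclideanSpace ℝ (Fin n) :=
  (EuclideanSpace.equiv (Fin n) ℝ).symm fun i => z (Fin.castAdd k i)

theorem embXY_projX (z : EuclideanSpace ℝ (Fin (n + k))) :
    embXY n k (projX n k z) (fun j => z (Fin.natAdd n j)) = z := by
  ext i
  induction i using Fin.addCases <;> simp [projX]

theorem norm_projX_sq (z : EuclideanSpace ℝ (Fin (n + k))) :
    ‖projX n k z‖ ^ 2 = ∑ i, z (Fin.castAdd k i) ^ 2 :=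
  EuclideanSpace.real_norm_sq_eq _

theorem dist_projX_le (z w : EuclideanSpace ℝ (Fin (n + k))) :
    dist (projX n k z) (projX n k w) ≤ dist z w := by
  rw [EuclideanSpace.dist_eq, EuclideanSpace.dist_eq, Fin.sum_univ_add]
  exact Real.sqrt_le_sqrt (le_add_of_nonneg_right (by positivity))

theorem setAverage_add_embXY_eq {ε : ℝ} (hε : 0 < ε)
    {Φ : EuclideanSpace ℝ (Fin (n + k)) → ℝ} {v : EuclideanSpace ℝ (Fin n) → ℝ}
    (hper : ∀ (z : EuclideanSpace ℝ (Fin (n + k))) (m : Fin k → ℤ),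
      Φ (z + embXY n k 0 (fun j => ε * (m j : ℝ))) = Φ z)
    (hv : ∀ x, v x = ⨍ y in univ.pi (fun _ : Fin k => Icc (0 : ℝ) ε), Φ (embXY n k x y))
    (w : EuclideanSpace ℝ (Fin (n + k))) :
    ⨍ c in univ.pi (fun _ : Fin k => Icc (0 : ℝ) ε), Φ (w + embXY n k 0 c) =
      v (projX n k w) := by
  have hw : ∀ c, w + embXY n k 0 c =
      embXY n k (projX n k w) ((fun j => w (Fin.natAdd n j)) + c) := fun c => by
    nth_rw 1 [← embXY_projX w]
    rw [embXY_add, add_zero]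
  have hperw (y : Fin k → ℝ) (m : Fin k → ℤ) :
      Φ (embXY n k (projX n k w) (y + fun j => ε * m j)) = Φ (embXY n k (projX n k w) y) := by
    have := hper (embXY n k (projX n k w) y) m
    rwa [embXY_add, add_zero] at this
  simp_rw [hv, setAverage_eq, hw,
    setIntegral_pi_Icc_add_of_periodic (f := fun y => Φ (embXY n k (projX n k w) y)) hε hperw]

theorem norm_projX_lt_of_mem_ball {z w : EuclideanSpace ℝ (Fin (n + k))} {r : ℝ}
    (hw : w ∈ ball z r) : ‖projX n k w‖ < ‖projX n k z‖ + r := by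
  have := (dist_projX_le w z).trans_lt hw
  rw [dist_eq_norm] at this
  linarith [norm_le_norm_add_norm_sub' (projX n k w) (projX n k z)]

theorem setIntegral_ball_le_of_fiberAverage_le {A ε K : ℝ} (hε : 0 < ε)
    {Φ : EuclideanSpace ℝ (Fin (n + k)) → ℝ} {v : EuclideanSpace ℝ (Fin n) → ℝ}
    (hΦ : Measurable Φ) (hΦA : ∀ z, |Φ z| ≤ A)
    (hper : ∀ (z : EuclideanSpace ℝ (Fin (n + k))) (m : Fin k → ℤ),
      Φ (z + embXY n k 0 (fun j => ε * (m j : ℝ))) = Φ z)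
    (hv : ∀ x, v x = ⨍ y in univ.pi (fun _ : Fin k => Icc (0 : ℝ) ε), Φ (embXY n k x y))
    (z : EuclideanSpace ℝ (Fin (n + k))) (r : ℝ) (hK : ∀ w ∈ ball z r, v (projX n k w) ≤ K) :
    ∫ w in ball z r, Φ w ≤ K * volume.real (ball z r) +
      A * volume.real (ball z (r + √k * ε) \ ball z (r - √k * ε)) := by
  set Q := univ.pi fun _ : Fin k => Icc (0 : ℝ) ε
  have hQ : 0 < volume.real Q := by
    simp [Q, measureReal_def, Real.volume_Icc_pi_toReal (fun _ => hε.le), hε]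
  have hshift (c : Fin k → ℝ) (hc : c ∈ Q) : ∫ w in ball z r, Φ w ≤
      (∫ w in ball z r, Φ (w + embXY n k 0 c)) +
        A * volume.real (ball z (r + √k * ε) \ ball z (r - √k * ε)) :=
    setIntegral_ball_le_setIntegral_ball_add hΦ hΦA z _ r <| norm_embXY_zero_le hε.le fun j =>
      abs_le.2 ⟨by linarith [(hc j trivial).1], (hc j trivial).2⟩
  have hint : Integrable (Function.uncurry fun c w => Φ (w + embXY n k 0 c))
      ((volume.restrict Q).prod (volume.restrict (ball z r))) := by
    have : IsFiniteMeasure (volume.restrict Q) :=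
      isFiniteMeasure_restrict.2 (ENNReal.toReal_pos_iff.1 hQ).2.ne
    have : IsFiniteMeasure (volume.restrict (ball z r)) :=
      isFiniteMeasure_restrict.2 measure_ball_lt_top.ne
    exact Integrable.of_bound (hΦ.comp (measurable_snd.add
      ((measurable_embXY 0).comp measurable_fst))).aestronglyMeasurable
      A (Filter.Eventually.of_forall fun p => hΦA _)
  exact le_mul_measureReal_add_of_setAverage_le (MeasurableSet.univ_pi fun _ => measurableSet_Icc)
    measurableSet_ball hQ measure_ball_lt_top.ne hint hshift
    fun w hw => (setAverage_add_embXY_eq hε hper hv w).trans_le (hK w hw)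

theorem le_fiberAverage_add_mul_sqrt {A L ε : ℝ} (hL : 0 ≤ L) (hε : 0 < ε) (hε1 : ε < 1)
    (hkε : √k * √ε < 1) {Φ : EuclideanSpace ℝ (Fin (n + k)) → ℝ}
    {v : EuclideanSpace ℝ (Fin n) → ℝ} (hΦ : Measurable Φ) (hΦA : ∀ z, |Φ z| ≤ A)
    (hper : ∀ (z : EuclideanSpace ℝ (Fin (n + k))) (m : Fin k → ℤ),
      Φ (z + embXY n k 0 (fun j => ε * (m j : ℝ))) = Φ z)
    (hsub : ∀ (z : EuclideanSpace ℝ (Fin (n + k))) (r : ℝ), 0 < r →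
      ball z r ⊆ {w : EuclideanSpace ℝ (Fin (n + k)) | ∑ i : Fin n, (w (Fin.castAdd k i)) ^ 2 < 4} →
      Φ z ≤ ⨍ w in ball z r, Φ w)
    (hv : ∀ x, v x = ⨍ y in univ.pi (fun _ : Fin k => Icc (0 : ℝ) ε), Φ (embXY n k x y))
    (hlip : LipschitzOnWith (Real.toNNReal L) v {x : EuclideanSpace ℝ (Fin n) | ‖x‖ < 2})
    {z : EuclideanSpace ℝ (Fin (n + k))} (hz : ‖projX n k z‖ < 1) :
    Φ z ≤ v (projX n k z) + (L + (n + k) * 2 ^ (n + k) * A * √k) * √ε := by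
  set r := √ε
  set t := √k * √ε
  have hr : 0 < r := Real.sqrt_pos.2 hε
  have hr1 : r ≤ 1 := Real.sqrt_le_one.2 hε1.le
  have hA : 0 ≤ A := (abs_nonneg _).trans (hΦA z)
  have hB : 0 < volume.real (ball z r) :=
    ENNReal.toReal_pos (measure_ball_pos volume z hr).ne' measure_ball_lt_top.ne
  have hslab (w) (hw : w ∈ ball z r) : ‖projX n k w‖ < 2 := by
    linarith [norm_projX_lt_of_mem_ball hw]
  have hmean : volume.real (ball z r) * Φ z ≤ ∫ w in ball z r, Φ w := by
    refine (le_inv_mul_iff₀ hB).1 ((hsub z r hr fun w hw => ?_).trans_eq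
      (by rw [setAverage_eq, smul_eq_mul]))
    rw [mem_ofPred_eq, ← norm_projX_sq]
    nlinarith [norm_nonneg (projX n k w), hslab w hw]
  have hlipB (w) (hw : w ∈ ball z r) : v (projX n k w) ≤ v (projX n k z) + L * r := by
    have := hlip.dist_le_mul _ (hslab w hw) _ (hslab z (mem_ball_self hr))
    rw [Real.coe_toNNReal L hL, Real.dist_eq] at this
    have hd := mul_le_mul_of_nonneg_left ((dist_projX_le w z).trans_lt hw).le hL
    linarith [le_abs_self (v (projX n k w) - v (projX n k z))]
  have hI := setIntegral_ball_le_of_fiberAverage_le hε hΦ hΦA hper hv z r hlipB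
  have hW := measureReal_ball_sdiff_ball_le volume z hr (by positivity) hkε
  rw [finrank_euclideanSpace_fin, mul_left_comm, Real.mul_self_sqrt hε.le] at hW
  have key : volume.real (ball z r) * Φ z ≤ volume.real (ball z r) *
      (v (projX n k z) + L * r + A * ((n + k : ℕ) * 2 ^ (n + k) * t)) := by
    linarith [mul_le_mul_of_nonneg_left hW hA]
  calc Φ z ≤ _ := le_of_mul_le_mul_left key hB
    _ = _ := by push_cast; ring

end Product

theorem stmt9 (n k : ℕ) (A L : ℝ) (hA : 0 ≤ A) (hL : 0 ≤ L) :
    ∃ C : ℝ, ∀ (ε : ℝ), 0 < ε → ε < 1 →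
      ∀ (Φ : EuclideanSpace ℝ (Fin (n + k)) → ℝ) (v : EuclideanSpace ℝ (Fin n) → ℝ),
      Measurable Φ →
      (∀ z, |Φ z| ≤ A) →
      (∀ (z : EuclideanSpace ℝ (Fin (n + k))) (m : Fin k → ℤ),
        Φ (z + embXY n k 0 (fun j => ε * (m j : ℝ))) = Φ z) →
      (∀ (z : EuclideanSpace ℝ (Fin (n + k))) (r : ℝ), 0 < r →
        Metric.ball z r ⊆
          {w : EuclideanSpace ℝ (Fin (n + k)) | ∑ i : Fin n, (w (Fin.castAdd k i))^2 < 4} →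
        Φ z ≤ ⨍ w in Metric.ball z r, Φ w) →
      (∀ x, v x = ⨍ y in Set.univ.pi (fun _ : Fin k => Set.Icc (0:ℝ) ε),
        Φ (embXY n k x y)) →
      LipschitzOnWith (Real.toNNReal L) v {x : EuclideanSpace ℝ (Fin n) | ‖x‖ < 2} →
      ∀ z : EuclideanSpace ℝ (Fin (n + k)),
        (∑ i : Fin n, (z (Fin.castAdd k i))^2 < 1) →
        Φ z ≤ v ((EuclideanSpace.equiv (Fin n) ℝ).symm (fun i => z (Fin.castAdd k i)))
          + C * Real.sqrt ε := by
  refine ⟨L + ((n + k) * 2 ^ (n + k) + 2) * A * √k, ?_⟩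
  intro ε hε hε1 Φ v hΦ hΦA hper hsub hv hlip z hz
  change Φ z ≤ v (projX n k z) + _
  -- For `√(kε) ≥ 1` the crude bound `Φ z - v ≤ 2A` already suffices.
  rcases lt_or_ge (√k * √ε) 1 with hkε | hkε
  · have hz' : ‖projX n k z‖ < 1 := by
      rwa [← sq_lt_one_iff₀ (norm_nonneg _), norm_projX_sq]
    have := le_fiberAverage_add_mul_sqrt hL hε hε1 hkε hΦ hΦA hper hsub hv hlip hz'
    have hAk : 0 ≤ A * √k * √ε := by positivity
    linarith
  · have hΦz : Φ z ≤ A := (abs_le.1 (hΦA z)).2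
    have hvz : -A ≤ v (projX n k z) := by
      refine (abs_le.1 ?_).1
      rw [hv]
      exact norm_setAverage_le (f := fun y => Φ (embXY n k _ y)) hA
        (isCompact_univ_pi fun _ => isCompact_Icc).measure_lt_top.ne fun y _ => hΦA _
    have hA2 : A ≤ A * (√k * √ε) := le_mul_of_one_le_right hA hkε
    have hd : 0 ≤ (n + k) * 2 ^ (n + k) * (A * √k * √ε) := by positivity
    have hLε : 0 ≤ L * √ε := by positivity
    linarith
end

section
/- Let u be a convex function on ℝⁿ whose subgradients all lie in a compact convex set Δ ⊂ ℝⁿ (equivalently, u is globally Lipschitz with ∂u(x) ⊂ Δ for all x). Suppose w ∈ ℝⁿ and at some point x₀ there exists a subgradient p₀ ∈ ∂u(x₀) with ⟨p₀, w⟩ = max_{q∈Δ} ⟨q,w⟩. Then for all t ≥ 0, u(x₀ + t w) = u(x₀) + t⟨p₀,w⟩, i.e. u is affine along the ray x₀ + ℝ_{≥0} w. -/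
/-!
Any subgradient `p` of `u` at a point `x₀ + t w` of the ray lies in `Δ`, so `⟪p, w⟫ ≤ ⟪p₀, w⟫`.
Comparing the supporting hyperplanes at `x₀` and at `x₀ + t w` then squeezes `u (x₀ + t w)`
between `u x₀ + t ⟪p₀, w⟫` and `u x₀ + t ⟪p, w⟫`. Subgradients exist everywhere by separating
`(x, u x)` from the open strict epigraph of the (automatically continuous) convex function `u`.
-/

open Set

theorem ConvexOn.exists_forall_add_le_of_continuous {E : Type*} [TopologicalSpace E]
    [AddCommGroup E] [Module ℝ E] [IsTopologicalAddGroup E] [ContinuousSMul ℝ E]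
    {u : E → ℝ} (hu : ConvexOn ℝ univ u) (hcont : Continuous u) (x : E) :
    ∃ ℓ : StrongDual ℝ E, ∀ y, u x + ℓ (y - x) ≤ u y := by
  obtain ⟨f, hf⟩ := geometric_hahn_banach_open_point (x := (x, u x))
    (by simpa using hu.convex_strict_epigraph)
    (isOpen_lt (hcont.comp continuous_fst) continuous_snd) (lt_irrefl (u x))
  set g := f.comp (.inl ℝ E ℝ)
  set c := -f (0, 1)
  have hf_apply : ∀ y r, f (y, r) = g y - r * c := fun y r => by
    have : ((y, r) : E × ℝ) = (y, 0) + r • (0, 1) := by simp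
    rw [this, map_add, map_smul, smul_eq_mul]
    simp [g, c]
  have hc : 0 < c := by
    have hsep := hf (x, u x + 1) (by simp)
    rw [hf_apply, hf_apply] at hsep
    linarith
  refine ⟨c⁻¹ • g, fun y => le_of_forall_gt_imp_ge_of_dense fun r hr => ?_⟩
  have hsep := hf (y, r) hr
  rw [hf_apply, hf_apply] at hsep
  have hg : g (y - x) ≤ (r - u x) * c := by rw [map_sub]; linarith
  have hℓ : c⁻¹ * g (y - x) ≤ r - u x := (inv_mul_le_iff₀ hc).2 (by linarith)
  simp only [FunLike.coe_smul, Pi.smul_apply, smul_eq_mul]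
  linarith

theorem ConvexOn.exists_forall_add_dotProduct_le {ι : Type*} [Fintype ι] {u : (ι → ℝ) → ℝ}
    (hu : ConvexOn ℝ univ u) (x : ι → ℝ) : ∃ p : ι → ℝ, ∀ y, u x + p ⬝ᵥ (y - x) ≤ u y := by
  classical
  obtain ⟨ℓ, hℓ⟩ := hu.exists_forall_add_le_of_continuous
    (continuousOn_univ.mp (hu.continuousOn isOpen_univ)) x
  refine ⟨(dotProductEquiv ℝ ι).symm ℓ.toLinearMap, fun y => ?_⟩
  have hdot := LinearMap.congr_fun ((dotProductEquiv ℝ ι).apply_symm_apply ℓ.toLinearMap) (y - x)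
  rw [dotProductEquiv_apply_apply] at hdot
  exact hdot ▸ hℓ y

theorem eq_add_mul_dotProduct_of_subgradients {ι : Type*} [Fintype ι] {u : (ι → ℝ) → ℝ}
    {x₀ w p₀ p : ι → ℝ} {t : ℝ} (ht : 0 ≤ t)
    (hp₀ : ∀ y, u x₀ + p₀ ⬝ᵥ (y - x₀) ≤ u y)
    (hp : ∀ y, u (x₀ + t • w) + p ⬝ᵥ (y - (x₀ + t • w)) ≤ u y)
    (hpw : p ⬝ᵥ w ≤ p₀ ⬝ᵥ w) :
    u (x₀ + t • w) = u x₀ + t * p₀ ⬝ᵥ w := by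
  have lower := hp₀ (x₀ + t • w)
  have upper := hp x₀
  simp only [add_sub_cancel_left, sub_add_cancel_left, dotProduct_smul, dotProduct_neg,
    smul_eq_mul] at lower upper
  linarith [mul_le_mul_of_nonneg_left hpw ht]

theorem stmt12_general (n : ℕ) (Δ : Set (Fin n → ℝ))
    (u : (Fin n → ℝ) → ℝ) (huconv : ConvexOn ℝ Set.univ u)
    (hsub : ∀ x p : Fin n → ℝ, (∀ y, u x + ∑ i, p i * (y i - x i) ≤ u y) → p ∈ Δ)
    (w x₀ p₀ : Fin n → ℝ)
    (hp₀ : ∀ y, u x₀ + ∑ i, p₀ i * (y i - x₀ i) ≤ u y)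
    (hmax : ∀ q ∈ Δ, (∑ i, q i * w i) ≤ ∑ i, p₀ i * w i) :
    ∀ t : ℝ, 0 ≤ t → u (x₀ + t • w) = u x₀ + t * ∑ i, p₀ i * w i := by
  intro t ht
  obtain ⟨p, hp⟩ := huconv.exists_forall_add_dotProduct_le (x₀ + t • w)
  exact eq_add_mul_dotProduct_of_subgradients ht hp₀ hp (hmax p (hsub _ p hp))

theorem stmt12 (n : ℕ) (Δ : Set (Fin n → ℝ)) (hcomp : IsCompact Δ) (hconv : Convex ℝ Δ)
    (u : (Fin n → ℝ) → ℝ) (huconv : ConvexOn ℝ Set.univ u)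
    (hsub : ∀ x p : Fin n → ℝ, (∀ y, u x + ∑ i, p i * (y i - x i) ≤ u y) → p ∈ Δ)
    (w x₀ p₀ : Fin n → ℝ)
    (hp₀ : ∀ y, u x₀ + ∑ i, p₀ i * (y i - x₀ i) ≤ u y)
    (hmax : ∀ q ∈ Δ, (∑ i, q i * w i) ≤ ∑ i, p₀ i * w i) :
    ∀ t : ℝ, 0 ≤ t → u (x₀ + t • w) = u x₀ + t * ∑ i, p₀ i * w i :=
  stmt12_general n Δ u huconv hsub w x₀ p₀ hp₀ hmax
end
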